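/- Let f : E → ℝ be a twice continuously differentiable convex function on a finite-dimensional real inner-product space, with invertible Hessian H = f''(θ*) at a global minimizer θ*, and suppose that for all θ₁, θ₂ ∈ E and all z: e^{-S·d(θ₁,θ₂)} ⟨z, f''(θ₁) z⟩ ≤ ⟨z, f''(θ₂) z⟩ ≤ e^{S·d(θ₁,θ₂)} ⟨z, f''(θ₁) z⟩, where d(θ₁,θ₂) = √⟨θ₂-θ₁, H(θ₂-θ₁)⟩ and S ≥ 0. Then for all θ, with d = d(θ, θ*): f(θ) - f(θ*) ≤ (e^{Sd} - Sd - 1)/S². -/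

import Mathlib

/-!
Restrict `f` to the ray `t ↦ θ* + t v`, `v = θ - θ*`. Then `φ(t) = f(θ* + t v)` has `φ'(0) = 0`
since `θ*` minimizes `f`, and the Hessian comparison with `θ₁ = θ*` gives
`φ''(t) ≤ d² e^{S d t}` for `t ≥ 0`. The right-hand side is the second derivative of
`ψ(t) = (e^{S d t} - S d t - 1) / S²`, which also has `ψ'(0) = 0`, so integrating twice over
`[0, 1]` yields `φ(1) - φ(0) ≤ ψ(1)`.
-/

open scoped RealInnerProductSpace

open Set Real

theorem monotoneOn_Icc_of_hasDerivAt_nonneg {f f' : ℝ → ℝ} {a b : ℝ}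
    (hf : ∀ t ∈ Icc a b, HasDerivAt f (f' t) t) (hf' : ∀ t ∈ Icc a b, 0 ≤ f' t) :
    MonotoneOn f (Icc a b) :=
  monotoneOn_of_hasDerivWithinAt_nonneg (convex_Icc a b)
    (fun t ht => (hf t ht).continuousAt.continuousWithinAt)
    (fun t ht => (hf t (interior_subset ht)).hasDerivWithinAt)
    (fun t ht => hf' t (interior_subset ht))

theorem sub_le_sub_of_deriv_le_of_deriv2_le {φ φ' φ'' ψ ψ' ψ'' : ℝ → ℝ} {a b : ℝ} (hab : a ≤ b)
    (hφ : ∀ t ∈ Icc a b, HasDerivAt φ (φ' t) t) (hφ' : ∀ t ∈ Icc a b, HasDerivAt φ' (φ'' t) t)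
    (hψ : ∀ t ∈ Icc a b, HasDerivAt ψ (ψ' t) t) (hψ' : ∀ t ∈ Icc a b, HasDerivAt ψ' (ψ'' t) t)
    (ha : φ' a ≤ ψ' a) (h2 : ∀ t ∈ Icc a b, φ'' t ≤ ψ'' t) :
    φ b - φ a ≤ ψ b - ψ a := by
  have hslope : MonotoneOn (fun t => ψ' t - φ' t) (Icc a b) :=
    monotoneOn_Icc_of_hasDerivAt_nonneg (fun t ht => (hψ' t ht).sub (hφ' t ht))
      (fun t ht => sub_nonneg.2 (h2 t ht))
  have hgap : MonotoneOn (fun t => ψ t - φ t) (Icc a b) :=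
    monotoneOn_Icc_of_hasDerivAt_nonneg (fun t ht => (hψ t ht).sub (hφ t ht)) fun t ht => by
      have := hslope (left_mem_Icc.2 hab) ht ht.1
      simp only at this
      linarith
  have := hgap (left_mem_Icc.2 hab) (right_mem_Icc.2 hab) hab
  simp only at this
  linarith

theorem hasDerivAt_exp_mul_sub_mul_sub_one (a t : ℝ) :
    HasDerivAt (fun s => exp (a * s) - a * s - 1) (a * (exp (a * t) - 1)) t := by
  have h : HasDerivAt (fun s => a * s) a t := by simpa using (hasDerivAt_id t).const_mul a
  exact ((h.exp.sub h).sub_const 1).congr_deriv (by ring)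

theorem hasDerivAt_mul_exp_mul_sub_one (a t : ℝ) :
    HasDerivAt (fun s => a * (exp (a * s) - 1)) (a ^ 2 * exp (a * t)) t := by
  have h : HasDerivAt (fun s => a * s) a t := by simpa using (hasDerivAt_id t).const_mul a
  exact ((h.exp.sub_const 1).const_mul a).congr_deriv (by ring)

section Ray

variable {E : Type*} [NormedAddCommGroup E] [InnerProductSpace ℝ E]

theorem hasDerivAt_add_smul (x v : E) (t : ℝ) : HasDerivAt (fun s : ℝ => x + s • v) v t := by
  simpa using ((hasDerivAt_id t).smul_const v).const_add x

theorem HasGradientAt.hasDerivAt_comp_add_smul [CompleteSpace E] {f : E → ℝ} {x v y : E} {t : ℝ}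
    (hf : HasGradientAt f y (x + t • v)) :
    HasDerivAt (fun s : ℝ => f (x + s • v)) ⟪y, v⟫ t :=
  (hf.hasFDerivAt.comp_hasDerivAt t (hasDerivAt_add_smul x v t)).congr_deriv (by simp)

theorem HasFDerivAt.hasDerivAt_inner_comp_add_smul {g : E → E} {L : E →L[ℝ] E} {x v : E} {t : ℝ}
    (hg : HasFDerivAt g L (x + t • v)) :
    HasDerivAt (fun s : ℝ => ⟪g (x + s • v), v⟫) ⟪v, L v⟫ t := by
  simpa [real_inner_comm] using
    (hg.comp_hasDerivAt t (hasDerivAt_add_smul x v t)).inner ℝ (hasDerivAt_const t v)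

theorem sqrt_inner_smul_map_smul (Q : E →L[ℝ] E) (v : E) {t : ℝ} (ht : 0 ≤ t) :
    √⟪t • v, Q (t • v)⟫ = t * √⟪v, Q v⟫ := by
  rw [map_smul, real_inner_smul_left, real_inner_smul_right, ← mul_assoc, ← sq,
    Real.sqrt_mul (sq_nonneg t), Real.sqrt_sq ht]

theorem inner_apply_add_smul_le (Hess : E → E →L[ℝ] E) (θs v : E) {S t : ℝ} (ht : 0 ≤ t)
    (hcomp : ∀ θ, ⟪v, Hess θ v⟫ ≤ exp (S * √⟪θ - θs, Hess θs (θ - θs)⟫) * ⟪v, Hess θs v⟫) :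
    ⟪v, Hess (θs + t • v) v⟫ ≤ √⟪v, Hess θs v⟫ ^ 2 * exp (S * √⟪v, Hess θs v⟫ * t) := by
  have hc : ⟪v, Hess θs v⟫ ≤ √⟪v, Hess θs v⟫ ^ 2 := Real.sq_sqrt' ▸ le_max_left _ _
  calc ⟪v, Hess (θs + t • v) v⟫
      ≤ exp (S * √⟪t • v, Hess θs (t • v)⟫) * ⟪v, Hess θs v⟫ := by
        simpa using hcomp (θs + t • v)
    _ ≤ √⟪v, Hess θs v⟫ ^ 2 * exp (S * √⟪v, Hess θs v⟫ * t) := by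
        rw [sqrt_inner_smul_map_smul _ _ ht, mul_comm t, ← mul_assoc, mul_comm _ (exp _)]
        gcongr

end Ray

theorem excess_risk_self_concordant_general
    {E : Type*} [NormedAddCommGroup E] [InnerProductSpace ℝ E] [FiniteDimensional ℝ E]
    (f : E → ℝ) (g : E → E) (Hess : E → E →L[ℝ] E) (θs : E) (S : ℝ) (hS : 0 < S)
    (hg : ∀ θ, HasGradientAt f (g θ) θ)
    (hHess : ∀ θ, HasFDerivAt g (Hess θ) θ)
    (hmin : ∀ θ, f θs ≤ f θ)
    (hcomp : ∀ θ₁ θ₂ z : E,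
      Real.exp (-(S * Real.sqrt ⟪θ₂ - θ₁, Hess θs (θ₂ - θ₁)⟫)) * ⟪z, Hess θ₁ z⟫
          ≤ ⟪z, Hess θ₂ z⟫ ∧
        ⟪z, Hess θ₂ z⟫
          ≤ Real.exp (S * Real.sqrt ⟪θ₂ - θ₁, Hess θs (θ₂ - θ₁)⟫) * ⟪z, Hess θ₁ z⟫)
    (θ : E) :
    f θ - f θs ≤ (Real.exp (S * Real.sqrt ⟪θ - θs, Hess θs (θ - θs)⟫)
        - S * Real.sqrt ⟪θ - θs, Hess θs (θ - θs)⟫ - 1) / S ^ 2 := by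
  set v := θ - θs
  set d := √⟪v, Hess θs v⟫
  have hφ (t : ℝ) := (hg (θs + t • v)).hasDerivAt_comp_add_smul
  have hφ' (t : ℝ) := (hHess (θs + t • v)).hasDerivAt_inner_comp_add_smul
  have hψ (t : ℝ) := (hasDerivAt_exp_mul_sub_mul_sub_one (S * d) t).div_const (S ^ 2)
  have hψ' (t : ℝ) := (hasDerivAt_mul_exp_mul_sub_one (S * d) t).div_const (S ^ 2)
  have hslope₀ : ⟪g θs, v⟫ = 0 := by
    simpa using IsLocalMin.hasDerivAt_eq_zero (.of_forall fun _ => by simpa using hmin _) (hφ 0)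
  have hcurv (t : ℝ) (ht : t ∈ Icc (0 : ℝ) 1) :
      ⟪v, Hess (θs + t • v) v⟫ ≤ (S * d) ^ 2 * exp (S * d * t) / S ^ 2 := by
    rw [mul_pow, mul_div_right_comm, mul_div_cancel_left₀ _ (by positivity)]
    exact inner_apply_add_smul_le Hess θs v ht.1 fun θ => (hcomp θs θ v).2
  simpa [v] using sub_le_sub_of_deriv_le_of_deriv2_le zero_le_one
    (fun t _ => hφ t) (fun t _ => hφ' t) (fun t _ => hψ t) (fun t _ => hψ' t)
    (by simp [hslope₀]) hcurv

/-- Excess risk upper bound for generalized self-concordant functions: under the two-sided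
Hessian comparison along segments (with weights given by `H = f''(θ*)`, `θ*` a global
minimizer with invertible Hessian), `f(θ) - f(θ*) ≤ (e^{Sd} - Sd - 1)/S²` where
`d = √⟨θ-θ*, H(θ-θ*)⟩`. -/
theorem excess_risk_self_concordant
    {E : Type*} [NormedAddCommGroup E] [InnerProductSpace ℝ E] [FiniteDimensional ℝ E]
    (f : E → ℝ) (g : E → E) (Hess : E → E →L[ℝ] E) (θs : E) (S : ℝ) (hS : 0 < S)
    (hconv : ConvexOn ℝ Set.univ f)
    (hg : ∀ θ, HasGradientAt f (g θ) θ)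
    (hHess : ∀ θ, HasFDerivAt g (Hess θ) θ)
    (hHessCont : Continuous Hess)
    (hmin : ∀ θ, f θs ≤ f θ)
    (hinv : Function.Bijective (Hess θs))
    (hcomp : ∀ θ₁ θ₂ z : E,
      Real.exp (-(S * Real.sqrt ⟪θ₂ - θ₁, Hess θs (θ₂ - θ₁)⟫)) * ⟪z, Hess θ₁ z⟫
          ≤ ⟪z, Hess θ₂ z⟫ ∧
        ⟪z, Hess θ₂ z⟫
          ≤ Real.exp (S * Real.sqrt ⟪θ₂ - θ₁, Hess θs (θ₂ - θ₁)⟫) * ⟪z, Hess θ₁ z⟫)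
    (θ : E) :
    f θ - f θs ≤ (Real.exp (S * Real.sqrt ⟪θ - θs, Hess θs (θ - θs)⟫)
        - S * Real.sqrt ⟪θ - θs, Hess θs (θ - θs)⟫ - 1) / S ^ 2 :=
  excess_risk_self_concordant_general f g Hess θs S hS hg hHess hmin hcomp θ
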